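/- arXiv:1602.08894 — 2 statements merged into one kernel-verified Lean document; each statement's English description precedes it below -/
import Mathlib

section
/- Let d ≥ 2 and let ρ be a real-valued functional on the set of d-quasi-copulas that is increasing with respect to the lower orthant order and continuous with respect to pointwise convergence. Let θ satisfy ρ(W_d) < θ < ρ(M_d) and fix u ∈ [0,1]^d. Then the set {Q(u) : Q a d-quasi-copula with ρ(Q) = θ} attains its maximum Q_up^{ρ,θ}(u), and: if θ ≤ ρ(Q_low^{u,M_d(u)}) then Q_up^{ρ,θ}(u) equals the largest r ∈ [W_d(u), M_d(u)] with ρ(Q_low^{u,r}) = θ (such an r exists), while if θ > ρ(Q_low^{u,M_d(u)}) then Q_up^{ρ,θ}(u) = M_d(u). Moreover, the function u ↦ Q_up^{ρ,θ}(u) is a d-quasi-copula. -/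
open scoped BigOperators NNReal ENNReal

noncomputable section

/-- Membership in the unit cube `[0,1]^ι`. -/
def InCube {ι : Type*} (u : ι → ℝ) : Prop := ∀ i, 0 ≤ u i ∧ u i ≤ 1

/-- A (quasi-)copula on the index set `ι`: it maps the unit cube to `[0,1]`,
satisfies the boundary conditions (QC1), is increasing in each argument (QC2)
and is `1`-Lipschitz for the `l¹`-norm (QC3). -/
structure IsQuasiCopula (ι : Type*) [Fintype ι] (Q : (ι → ℝ) → ℝ) : Prop where
  nonneg : ∀ u : ι → ℝ, InCube u → 0 ≤ Q u
  le_one : ∀ u : ι → ℝ, InCube u → Q u ≤ 1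
  zero_boundary : ∀ u : ι → ℝ, InCube u → (∃ i, u i = 0) → Q u = 0
  one_boundary : ∀ u : ι → ℝ, InCube u → ∀ i : ι, (∀ j, j ≠ i → u j = 1) → Q u = u i
  mono : ∀ u v : ι → ℝ, InCube u → InCube v → (∀ i, u i ≤ v i) → Q u ≤ Q v
  lipschitz : ∀ u v : ι → ℝ, InCube u → InCube v → |Q u - Q v| ≤ ∑ i, |u i - v i|

/-- The `Q`-volume of the box `(a, b]`: the signed sum over the vertices of the box,
a vertex getting the sign `(-1)^{#{i : c i = a i}}`. -/
def boxVolume {ι : Type*} [Fintype ι] [DecidableEq ι] (Q : (ι → ℝ) → ℝ)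
    (a b : ι → ℝ) : ℝ :=
  ∑ J : Finset ι, (-1 : ℝ) ^ J.card * Q (fun i => if i ∈ J then a i else b i)

/-- `d`-increasingness: every box contained in the unit cube has nonnegative volume. -/
def DIncreasing {ι : Type*} [Fintype ι] [DecidableEq ι] (Q : (ι → ℝ) → ℝ) : Prop :=
  ∀ a b : ι → ℝ, InCube a → InCube b → (∀ i, a i ≤ b i) → 0 ≤ boxVolume Q a b

/-- A copula is a quasi-copula which is `d`-increasing. -/
def IsCopula (ι : Type*) [Fintype ι] [DecidableEq ι] (Q : (ι → ℝ) → ℝ) : Prop :=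
  IsQuasiCopula ι Q ∧ DIncreasing Q

/-- The lower Fréchet–Hoeffding bound `W_d(u) = max(0, Σ u_i - d + 1)`. -/
def Wd {ι : Type*} [Fintype ι] (u : ι → ℝ) : ℝ :=
  max 0 ((∑ i, u i) - (Fintype.card ι : ℝ) + 1)

/-- The upper Fréchet–Hoeffding bound `M_d(u) = min(u_1, …, u_d)`. -/
def Md {ι : Type*} (u : ι → ℝ) : ℝ := sInf (Set.range u)

/-- The improved lower Fréchet–Hoeffding bound for the prescription `Q = Q*` on `S`:
`max(0, Σ u_i - d + 1, max_{x ∈ S} (Q*(x) - Σ (x_i - u_i)^+))`. -/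
def QLowS {ι : Type*} [Fintype ι] (S : Set (ι → ℝ)) (Q : (ι → ℝ) → ℝ)
    (u : ι → ℝ) : ℝ :=
  max (Wd u) (sSup ((fun x => Q x - ∑ i, max (x i - u i) 0) '' S))

/-- The improved upper Fréchet–Hoeffding bound for the prescription `Q = Q*` on `S`:
`min(u_1, …, u_d, min_{x ∈ S} (Q*(x) + Σ (u_i - x_i)^+))`. -/
def QUpS {ι : Type*} [Fintype ι] (S : Set (ι → ℝ)) (Q : (ι → ℝ) → ℝ)
    (u : ι → ℝ) : ℝ :=
  min (Md u) (sInf ((fun x => Q x + ∑ i, max (u i - x i) 0) '' S))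

/-- The single-point improved lower bound `Q_low^{x,r}`. -/
def QLowPt {ι : Type*} [Fintype ι] (x : ι → ℝ) (r : ℝ) (v : ι → ℝ) : ℝ :=
  max (Wd v) (r - ∑ i, max (x i - v i) 0)

/-- The single-point improved upper bound `Q_up^{x,r}`. -/
def QUpPt {ι : Type*} [Fintype ι] (x : ι → ℝ) (r : ℝ) (v : ι → ℝ) : ℝ :=
  min (Md v) (r + ∑ i, max (v i - x i) 0)

/-- The `J`-margin of `Q`: evaluate `Q` at the lift of `v`, i.e. the vector which
carries the coordinates of `v` on `J` and equals `1` elsewhere. -/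
def marginQ {ι : Type*} [Fintype ι] [DecidableEq ι] (Q : (ι → ℝ) → ℝ)
    (J : Finset ι) (v : ↥J → ℝ) : ℝ :=
  Q fun i => if h : i ∈ J then v ⟨i, h⟩ else 1

/-- The survival function of `Q`:
`Q̂(u) = V_Q((u,1]) = Σ_{J ⊆ ι} (-1)^{|J|} Q(u^J)` where `u^J` agrees with `u` on `J`
and equals `1` elsewhere. -/
def survivalF {ι : Type*} [Fintype ι] [DecidableEq ι] (Q : (ι → ℝ) → ℝ)
    (u : ι → ℝ) : ℝ :=
  ∑ J : Finset ι, (-1 : ℝ) ^ J.card * Q (fun i => if i ∈ J then u i else 1)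

/-- The pointwise upper bound over the class of quasi-copulas with `ρ(Q) = θ`. -/
def QUpRho (d : ℕ) (rho : ((Fin d → ℝ) → ℝ) → ℝ) (θ : ℝ) (u : Fin d → ℝ) : ℝ :=
  sSup {y | ∃ Q, IsQuasiCopula (Fin d) Q ∧ rho Q = θ ∧ Q u = y}

section Helpers

variable {d : ℕ}

lemma md_le (u : Fin d → ℝ) (i : Fin d) : Md u ≤ u i :=
  csInf_le (Set.finite_range u).bddBelow ⟨i, rfl⟩

lemma le_md (hd : 0 < d) {u : Fin d → ℝ} {c : ℝ} (h : ∀ i, c ≤ u i) : c ≤ Md u := by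
  haveI : Nonempty (Fin d) := ⟨⟨0, hd⟩⟩
  exact le_csInf (Set.range_nonempty u) (by rintro y ⟨i, rfl⟩; exact h i)

lemma sum_one_erase (i : Fin d) :
    ∑ _j ∈ Finset.univ.erase i, (1 : ℝ) = (d : ℝ) - 1 := by
  rw [Finset.sum_const, Finset.card_erase_of_mem (Finset.mem_univ i),
    Finset.card_univ, Fintype.card_fin, nsmul_eq_mul, mul_one,
    Nat.cast_sub i.pos, Nat.cast_one]

lemma sum_le_card {u : Fin d → ℝ} (hu : InCube u) : ∑ i, u i ≤ (d : ℝ) := by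
  calc ∑ i, u i ≤ ∑ _i : Fin d, (1 : ℝ) :=
        Finset.sum_le_sum fun i _ => (hu i).2
    _ = (d : ℝ) := by simp

lemma sum_erase_le {u : Fin d → ℝ} (hu : InCube u) (i : Fin d) :
    ∑ j, u j ≤ u i + ((d : ℝ) - 1) := by
  have h1 : u i + ∑ j ∈ Finset.univ.erase i, u j = ∑ j, u j :=
    Finset.add_sum_erase _ u (Finset.mem_univ i)
  have h2 : ∑ j ∈ Finset.univ.erase i, u j ≤ ∑ _j ∈ Finset.univ.erase i, (1 : ℝ) :=
    Finset.sum_le_sum fun j _ => (hu j).2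
  have h3 := sum_one_erase i
  linarith

lemma sum_sub_le {u : Fin d → ℝ} (hu : InCube u) (i : Fin d) :
    (∑ j, u j) - (d : ℝ) + 1 ≤ u i := by
  have := sum_erase_le hu i; linarith

lemma wd_le_coord {u : Fin d → ℝ} (hu : InCube u) (i : Fin d) : Wd u ≤ u i := by
  refine max_le (hu i).1 ?_
  simpa [Fintype.card_fin] using sum_sub_le hu i

lemma wd_le_md (hd : 0 < d) {u : Fin d → ℝ} (hu : InCube u) : Wd u ≤ Md u :=
  le_md hd fun i => wd_le_coord hu i

lemma qlowpt_self {u : Fin d → ℝ} {r : ℝ} (h : Wd u ≤ r) : QLowPt u r u = r := by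
  simp [QLowPt, max_eq_right h]

lemma isQC_Wd (hd : 0 < d) : IsQuasiCopula (Fin d) Wd where
  nonneg u _ := le_max_left _ _
  le_one u hu := by
    refine max_le zero_le_one ?_
    have := sum_le_card hu
    simp only [Fintype.card_fin]
    linarith
  zero_boundary u hu := by
    rintro ⟨i, hi⟩
    have h := sum_sub_le hu i
    rw [hi] at h
    refine max_eq_left ?_
    simp only [Fintype.card_fin]
    linarith
  one_boundary u hu i h1 := by
    have hsum : ∑ j, u j = u i + ((d : ℝ) - 1) := by
      have h1' : u i + ∑ j ∈ Finset.univ.erase i, u j = ∑ j, u j :=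
        Finset.add_sum_erase _ u (Finset.mem_univ i)
      have h2 : ∑ j ∈ Finset.univ.erase i, u j = ∑ _j ∈ Finset.univ.erase i, (1 : ℝ) :=
        Finset.sum_congr rfl fun j hj => h1 j (Finset.mem_erase.1 hj).1
      have h3 := sum_one_erase i
      linarith
    have h' : (∑ j, u j) - (Fintype.card (Fin d) : ℝ) + 1 = u i := by
      rw [Fintype.card_fin]; linarith
    rw [Wd, h', max_eq_right (hu i).1]
  mono u v hu hv h := by
    refine max_le_max le_rfl ?_
    have : ∑ i, u i ≤ ∑ i, v i := Finset.sum_le_sum fun i _ => h i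
    linarith
  lipschitz u v hu hv := by
    have h1 : |Wd u - Wd v| ≤ max |0 - (0:ℝ)|
        |((∑ i, u i) - (Fintype.card (Fin d) : ℝ) + 1) -
          ((∑ i, v i) - (Fintype.card (Fin d) : ℝ) + 1)| :=
      abs_max_sub_max_le_max _ _ _ _
    have h2 : ((∑ i, u i) - (Fintype.card (Fin d) : ℝ) + 1) -
        ((∑ i, v i) - (Fintype.card (Fin d) : ℝ) + 1) = ∑ i, (u i - v i) := by
      rw [Finset.sum_sub_distrib]; ring
    have h3 : |∑ i, (u i - v i)| ≤ ∑ i, |u i - v i| := Finset.abs_sum_le_sum_abs _ _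
    have h4 : (0:ℝ) ≤ ∑ i, |u i - v i| := Finset.sum_nonneg fun i _ => abs_nonneg _
    rw [h2] at h1
    refine h1.trans (max_le (by simpa using h4) h3)

lemma isQC_Md (hd : 0 < d) : IsQuasiCopula (Fin d) Md where
  nonneg u hu := le_md hd fun i => (hu i).1
  le_one u hu := (md_le u ⟨0, hd⟩).trans (hu ⟨0, hd⟩).2
  zero_boundary u hu := by
    rintro ⟨i, hi⟩
    exact le_antisymm (hi ▸ md_le u i) (le_md hd fun j => (hu j).1)
  one_boundary u hu i h1 := by
    refine le_antisymm (md_le u i) (le_md hd fun j => ?_)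
    by_cases hj : j = i
    · subst hj; exact le_rfl
    · rw [h1 j hj]; exact (hu i).2
  mono u v hu hv h := le_md hd fun i => (md_le u i).trans (h i)
  lipschitz u v hu hv := by
    have key : ∀ a b : Fin d → ℝ, Md a - Md b ≤ ∑ i, |a i - b i| := by
      intro a b
      have : Md a - (∑ i, |a i - b i|) ≤ Md b := by
        refine le_md hd fun i => ?_
        have h1 : Md a ≤ a i := md_le a i
        have h2 : a i - b i ≤ |a i - b i| := le_abs_self _
        have h3 : |a i - b i| ≤ ∑ j, |a j - b j| :=
          Finset.single_le_sum (f := fun j => |a j - b j|)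
            (fun j _ => abs_nonneg _) (Finset.mem_univ i)
        linarith
      linarith
    rw [abs_sub_le_iff]
    refine ⟨key u v, ?_⟩
    have := key v u
    simpa [abs_sub_comm] using this

lemma isQC_QLowPt (hd : 0 < d) {u : Fin d → ℝ} (hu : InCube u) {r : ℝ}
    (hr1 : Wd u ≤ r) (hr2 : r ≤ Md u) : IsQuasiCopula (Fin d) (QLowPt u r) where
  nonneg v hv := le_trans ((isQC_Wd hd).nonneg v hv) (le_max_left _ _)
  le_one v hv := by
    refine max_le ((isQC_Wd hd).le_one v hv) ?_
    have hA : (0:ℝ) ≤ ∑ i, max (u i - v i) 0 :=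
      Finset.sum_nonneg fun i _ => le_max_right _ _
    have : r ≤ 1 := hr2.trans ((md_le u ⟨0, hd⟩).trans (hu ⟨0, hd⟩).2)
    linarith
  zero_boundary v hv := by
    rintro ⟨i, hi⟩
    have hW : Wd v = 0 := (isQC_Wd hd).zero_boundary v hv ⟨i, hi⟩
    have h1 : max (u i - v i) 0 ≤ ∑ j, max (u j - v j) 0 :=
      Finset.single_le_sum (f := fun j => max (u j - v j) 0)
        (fun j _ => le_max_right _ _) (Finset.mem_univ i)
    have h2 : u i ≤ max (u i - v i) 0 := by
      rw [hi, sub_zero]; exact le_max_left _ _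
    have h3 : r ≤ u i := hr2.trans (md_le u i)
    rw [QLowPt, hW]
    exact max_eq_left (by linarith)
  one_boundary v hv i h1 := by
    have hW : Wd v = v i := (isQC_Wd hd).one_boundary v hv i h1
    have hs : max (u i - v i) 0 ≤ ∑ j, max (u j - v j) 0 :=
      Finset.single_le_sum (f := fun j => max (u j - v j) 0)
        (fun j _ => le_max_right _ _) (Finset.mem_univ i)
    have h3 : r ≤ u i := hr2.trans (md_le u i)
    have h4 : r - ∑ j, max (u j - v j) 0 ≤ v i := by
      rcases le_total (u i) (v i) with h | h
      · have : (0:ℝ) ≤ max (u i - v i) 0 := le_max_right _ _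
        linarith
      · have : u i - v i ≤ max (u i - v i) 0 := le_max_left _ _
        linarith
    rw [QLowPt, hW]
    exact max_eq_left h4
  mono v w hv hw h := by
    refine max_le_max ((isQC_Wd hd).mono v w hv hw h) ?_
    have : ∑ i, max (u i - w i) 0 ≤ ∑ i, max (u i - v i) 0 :=
      Finset.sum_le_sum fun i _ => max_le_max (by linarith [h i]) le_rfl
    linarith
  lipschitz v w hv hw := by
    have h1 : |QLowPt u r v - QLowPt u r w| ≤
        max |Wd v - Wd w|
          |(r - ∑ i, max (u i - v i) 0) - (r - ∑ i, max (u i - w i) 0)| :=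
      abs_max_sub_max_le_max _ _ _ _
    refine h1.trans (max_le ((isQC_Wd hd).lipschitz v w hv hw) ?_)
    have h2 : (r - ∑ i, max (u i - v i) 0) - (r - ∑ i, max (u i - w i) 0) =
        ∑ i, (max (u i - w i) 0 - max (u i - v i) 0) := by
      rw [Finset.sum_sub_distrib]; ring
    rw [h2]
    refine (Finset.abs_sum_le_sum_abs _ _).trans (Finset.sum_le_sum fun i _ => ?_)
    calc |max (u i - w i) 0 - max (u i - v i) 0|
        ≤ max |(u i - w i) - (u i - v i)| |(0:ℝ) - 0| := abs_max_sub_max_le_max _ _ _ _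
      _ = |v i - w i| := by
          rw [sub_zero, abs_zero,
            show (u i - w i) - (u i - v i) = v i - w i from by ring]
          exact max_eq_left (abs_nonneg _)

end Helpers
section Helpers2

variable {d : ℕ}

lemma incube_one : InCube (fun _ : Fin d => (1:ℝ)) := fun _ => ⟨zero_le_one, le_rfl⟩

lemma qc_le_coord {Q : (Fin d → ℝ) → ℝ} (hQ : IsQuasiCopula (Fin d) Q)
    {v : Fin d → ℝ} (hv : InCube v) (i : Fin d) : Q v ≤ v i := by
  classical
  set w : Fin d → ℝ := fun j => if j = i then v i else 1 with hw
  have hwc : InCube w := fun j => by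
    by_cases hj : j = i <;> simp [hw, hj, (hv i).1, (hv i).2]
  have hQw : Q w = v i := by
    have := hQ.one_boundary w hwc i (fun j hj => by simp [hw, hj])
    simpa [hw] using this
  have hle : ∀ j, v j ≤ w j := fun j => by
    by_cases hj : j = i <;> simp [hw, hj, (hv j).2]
  exact hQw ▸ hQ.mono v w hv hwc hle

lemma qc_le_md {Q : (Fin d → ℝ) → ℝ} (hd : 0 < d) (hQ : IsQuasiCopula (Fin d) Q)
    {v : Fin d → ℝ} (hv : InCube v) : Q v ≤ Md v :=
  le_md hd fun i => qc_le_coord hQ hv i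

lemma wd_le_qc {Q : (Fin d → ℝ) → ℝ} (hd : 0 < d) (hQ : IsQuasiCopula (Fin d) Q)
    {v : Fin d → ℝ} (hv : InCube v) : Wd v ≤ Q v := by
  refine max_le (hQ.nonneg v hv) ?_
  have hQ1 : Q (fun _ => 1) = 1 :=
    hQ.one_boundary _ incube_one ⟨0, hd⟩ (fun j _ => rfl)
  have hlip := hQ.lipschitz v (fun _ => 1) hv incube_one
  rw [hQ1] at hlip
  have habs : ∑ i, |v i - 1| = (d : ℝ) - ∑ i, v i := by
    have : ∀ i : Fin d, |v i - 1| = 1 - v i := fun i =>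
      by rw [abs_of_nonpos (by linarith [(hv i).2] : v i - 1 ≤ 0)]; ring
    rw [Finset.sum_congr rfl fun i _ => this i, Finset.sum_sub_distrib]
    simp
  rw [habs] at hlip
  have := abs_le.1 hlip
  simp only [Fintype.card_fin]
  linarith [this.1]

lemma qlowpt_le_qc {Q : (Fin d → ℝ) → ℝ} (hd : 0 < d) (hQ : IsQuasiCopula (Fin d) Q)
    {u v : Fin d → ℝ} (hu : InCube u) (hv : InCube v) : QLowPt u (Q u) v ≤ Q v := by
  refine max_le (wd_le_qc hd hQ hv) ?_
  set m : Fin d → ℝ := fun i => min (u i) (v i) with hm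
  have hmc : InCube m := fun i =>
    ⟨le_min (hu i).1 (hv i).1, (min_le_left _ _).trans (hu i).2⟩
  have h1 : Q m ≤ Q v := hQ.mono m v hmc hv fun i => min_le_right _ _
  have h2 := hQ.lipschitz u m hu hmc
  have h3 : ∑ i, |u i - m i| = ∑ i, max (u i - v i) 0 := by
    refine Finset.sum_congr rfl fun i _ => ?_
    rcases le_total (u i) (v i) with h | h
    · rw [hm]; simp only [min_eq_left h, sub_self, abs_zero, max_eq_right (by linarith : u i - v i ≤ 0)]
    · rw [hm]; simp only [min_eq_right h]
      rw [abs_of_nonneg (by linarith), max_eq_left (by linarith)]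
  rw [h3] at h2
  have := abs_le.1 h2
  linarith [this.1]

lemma isQC_convex {Q₁ Q₂ : (Fin d → ℝ) → ℝ} (h₁ : IsQuasiCopula (Fin d) Q₁)
    (h₂ : IsQuasiCopula (Fin d) Q₂) {t : ℝ} (ht0 : 0 ≤ t) (ht1 : t ≤ 1) :
    IsQuasiCopula (Fin d) (fun v => (1 - t) * Q₁ v + t * Q₂ v) where
  nonneg v hv := add_nonneg (mul_nonneg (by linarith) (h₁.nonneg v hv))
    (mul_nonneg ht0 (h₂.nonneg v hv))
  le_one v hv := by
    have a := h₁.le_one v hv; have b := h₂.le_one v hv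
    nlinarith
  zero_boundary v hv h := by rw [h₁.zero_boundary v hv h, h₂.zero_boundary v hv h]; ring
  one_boundary v hv i h := by
    rw [h₁.one_boundary v hv i h, h₂.one_boundary v hv i h]; ring
  mono v w hv hw h := add_le_add
    (mul_le_mul_of_nonneg_left (h₁.mono v w hv hw h) (by linarith))
    (mul_le_mul_of_nonneg_left (h₂.mono v w hv hw h) ht0)
  lipschitz v w hv hw := by
    have a := h₁.lipschitz v w hv hw
    have b := h₂.lipschitz v w hv hw
    have : ((1 - t) * Q₁ v + t * Q₂ v) - ((1 - t) * Q₁ w + t * Q₂ w) =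
        (1 - t) * (Q₁ v - Q₁ w) + t * (Q₂ v - Q₂ w) := by ring
    rw [this]
    calc |(1 - t) * (Q₁ v - Q₁ w) + t * (Q₂ v - Q₂ w)|
        ≤ |(1 - t) * (Q₁ v - Q₁ w)| + |t * (Q₂ v - Q₂ w)| := abs_add_le _ _
      _ = (1 - t) * |Q₁ v - Q₁ w| + t * |Q₂ v - Q₂ w| := by
          rw [abs_mul, abs_mul, abs_of_nonneg (by linarith : (0:ℝ) ≤ 1 - t),
            abs_of_nonneg ht0]
      _ ≤ (1 - t) * (∑ i, |v i - w i|) + t * (∑ i, |v i - w i|) := by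
          refine add_le_add (mul_le_mul_of_nonneg_left a (by linarith))
            (mul_le_mul_of_nonneg_left b ht0)
      _ = ∑ i, |v i - w i| := by ring

/-- Continuity of `t ↦ ρ(F t)` for a pointwise-Lipschitz path of quasi-copulas. -/
lemma cont_of_path {d : ℕ} (rho : ((Fin d → ℝ) → ℝ) → ℝ)
    (hcont : ∀ (Qn : ℕ → (Fin d → ℝ) → ℝ) (Q : (Fin d → ℝ) → ℝ),
      (∀ n, IsQuasiCopula (Fin d) (Qn n)) → IsQuasiCopula (Fin d) Q →
      (∀ u, InCube u → Filter.Tendsto (fun n => Qn n u) Filter.atTop (nhds (Q u))) →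
      Filter.Tendsto (fun n => rho (Qn n)) Filter.atTop (nhds (rho Q)))
    (F : ℝ → (Fin d → ℝ) → ℝ)
    (hQC : ∀ t, IsQuasiCopula (Fin d) (F t))
    (hLip : ∀ s t : ℝ, ∀ v, InCube v → |F s v - F t v| ≤ |s - t|) :
    Continuous fun t => rho (F t) := by
  rw [continuous_iff_seqContinuous]
  intro x p hx
  refine hcont (fun n => F (x n)) (F p) (fun n => hQC _) (hQC p) (fun v hv => ?_)
  rw [tendsto_iff_dist_tendsto_zero]
  refine squeeze_zero (fun n => dist_nonneg) (fun n => ?_)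
    (tendsto_iff_dist_tendsto_zero.1 hx)
  rw [Real.dist_eq, Real.dist_eq]
  exact hLip (x n) p v hv

end Helpers2
/-- upper bound on quasi-copulas with a prescribed functional value. -/
theorem stmt5 (d : ℕ) (hd : 2 ≤ d) (rho : ((Fin d → ℝ) → ℝ) → ℝ)
    (hmono : ∀ Q₁ Q₂, IsQuasiCopula (Fin d) Q₁ → IsQuasiCopula (Fin d) Q₂ →
      (∀ u, InCube u → Q₁ u ≤ Q₂ u) → rho Q₁ ≤ rho Q₂)
    (hcont : ∀ (Qn : ℕ → (Fin d → ℝ) → ℝ) (Q : (Fin d → ℝ) → ℝ),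
      (∀ n, IsQuasiCopula (Fin d) (Qn n)) → IsQuasiCopula (Fin d) Q →
      (∀ u, InCube u → Filter.Tendsto (fun n => Qn n u) Filter.atTop (nhds (Q u))) →
      Filter.Tendsto (fun n => rho (Qn n)) Filter.atTop (nhds (rho Q)))
    (θ : ℝ) (hθ₁ : rho Wd < θ) (hθ₂ : θ < rho Md) :
    (∀ u : Fin d → ℝ, InCube u →
      ((∃ Q, IsQuasiCopula (Fin d) Q ∧ rho Q = θ ∧ Q u = QUpRho d rho θ u) ∧
        (∀ Q, IsQuasiCopula (Fin d) Q → rho Q = θ → Q u ≤ QUpRho d rho θ u) ∧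
        (θ ≤ rho (QLowPt u (Md u)) →
          ∃ r ∈ Set.Icc (Wd u) (Md u), rho (QLowPt u r) = θ ∧
            (∀ r' ∈ Set.Icc (Wd u) (Md u), rho (QLowPt u r') = θ → r' ≤ r) ∧
            QUpRho d rho θ u = r) ∧
        (rho (QLowPt u (Md u)) < θ → QUpRho d rho θ u = Md u))) ∧
    IsQuasiCopula (Fin d) (QUpRho d rho θ) := by
  have hd0 : 0 < d := by omega
  have hQCW := isQC_Wd (d := d) hd0
  have hQCM := isQC_Md (d := d) hd0
  have rho_congr : ∀ Q₁ Q₂ : (Fin d → ℝ) → ℝ, IsQuasiCopula (Fin d) Q₁ →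
      IsQuasiCopula (Fin d) Q₂ → (∀ v, InCube v → Q₁ v = Q₂ v) → rho Q₁ = rho Q₂ :=
    fun Q₁ Q₂ h₁ h₂ h => le_antisymm
      (hmono Q₁ Q₂ h₁ h₂ fun v hv => (h v hv).le)
      (hmono Q₂ Q₁ h₂ h₁ fun v hv => (h v hv).ge)
  have key : ∀ u : (Fin d → ℝ), InCube u →
      IsGreatest {y | ∃ Q, IsQuasiCopula (Fin d) Q ∧ rho Q = θ ∧ Q u = y}
        (QUpRho d rho θ u) ∧
      (θ ≤ rho (QLowPt u (Md u)) →
        ∃ r ∈ Set.Icc (Wd u) (Md u), rho (QLowPt u r) = θ ∧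
          (∀ r' ∈ Set.Icc (Wd u) (Md u), rho (QLowPt u r') = θ → r' ≤ r) ∧
          QUpRho d rho θ u = r) ∧
      (rho (QLowPt u (Md u)) < θ → QUpRho d rho θ u = Md u) := by
    intro u hu
    have hWM : Wd u ≤ Md u := wd_le_md hd0 hu
    set S := {y | ∃ Q, IsQuasiCopula (Fin d) Q ∧ rho Q = θ ∧ Q u = y} with hS
    have hQup_def : QUpRho d rho θ u = sSup S := rfl
    rcases le_or_gt θ (rho (QLowPt u (Md u))) with hcase | hcase
    · -- case 1 : θ ≤ rho (QLowPt u (Md u))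
      set c : ℝ → ℝ := fun t => max (Wd u) (min (Md u) t) with hc
      have hc_mem : ∀ t, Wd u ≤ c t ∧ c t ≤ Md u := fun t =>
        ⟨le_max_left _ _, max_le hWM (min_le_left _ _)⟩
      have hc_eq : ∀ r ∈ Set.Icc (Wd u) (Md u), c r = r := fun r hr => by
        rw [hc]; dsimp only; rw [min_eq_right hr.2, max_eq_right hr.1]
      set g : ℝ → ℝ := fun t => rho (QLowPt u (c t)) with hg
      have hgQC : ∀ t, IsQuasiCopula (Fin d) (QLowPt u (c t)) := fun t =>
        isQC_QLowPt hd0 hu (hc_mem t).1 (hc_mem t).2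
      have hg_cont : Continuous g := by
        refine cont_of_path rho hcont _ hgQC ?_
        intro s t v hv
        have h1 : |QLowPt u (c s) v - QLowPt u (c t) v| ≤ |c s - c t| := by
          refine (abs_max_sub_max_le_max (Wd v) (c s - ∑ i, max (u i - v i) 0)
            (Wd v) (c t - ∑ i, max (u i - v i) 0)).trans ?_
          rw [sub_self, abs_zero, show (c s - ∑ i, max (u i - v i) 0) -
            (c t - ∑ i, max (u i - v i) 0) = c s - c t from by ring]
          exact max_le (abs_nonneg _) le_rfl
        refine h1.trans ?_
        refine (abs_max_sub_max_le_max _ _ _ _).trans ?_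
        rw [sub_self, abs_zero]
        refine max_le (abs_nonneg _) ?_
        refine (abs_min_sub_min_le_max _ _ _ _).trans ?_
        rw [sub_self, abs_zero]
        exact max_le (abs_nonneg _) le_rfl
      have hg_val : ∀ r ∈ Set.Icc (Wd u) (Md u), g r = rho (QLowPt u r) := fun r hr => by
        rw [hg]; dsimp only; rw [hc_eq r hr]
      have hgW : g (Wd u) = rho Wd := by
        rw [hg_val (Wd u) ⟨le_rfl, hWM⟩]
        refine rho_congr _ _ (isQC_QLowPt hd0 hu le_rfl hWM) hQCW fun v hv => ?_
        exact le_antisymm (qlowpt_le_qc hd0 hQCW hu hv) (le_max_left _ _)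
      have hgM : g (Md u) = rho (QLowPt u (Md u)) := hg_val (Md u) ⟨hWM, le_rfl⟩
      have hθmem : θ ∈ Set.Icc (g (Wd u)) (g (Md u)) :=
        ⟨by rw [hgW]; exact hθ₁.le, by rw [hgM]; exact hcase⟩
      obtain ⟨r₀, hr₀I, hr₀⟩ := intermediate_value_Icc hWM hg_cont.continuousOn hθmem
      set A := Set.Icc (Wd u) (Md u) ∩ g ⁻¹' {θ} with hA
      have hA_cpt : IsCompact A :=
        isCompact_Icc.inter_right (isClosed_singleton.preimage hg_cont)
      have hA_ne : A.Nonempty := ⟨r₀, hr₀I, hr₀⟩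
      set rstar := sSup A with hrstar
      have hrs : rstar ∈ A := hA_cpt.sSup_mem hA_ne
      have hub : ∀ r ∈ A, r ≤ rstar := fun r hr => le_csSup hA_cpt.bddAbove hr
      have hQs : IsQuasiCopula (Fin d) (QLowPt u rstar) :=
        isQC_QLowPt hd0 hu hrs.1.1 hrs.1.2
      have hgrs : g rstar = θ := hrs.2
      have hrhoQs : rho (QLowPt u rstar) = θ := by
        rw [← hg_val rstar hrs.1]; exact hgrs
      have hQsu : QLowPt u rstar u = rstar := qlowpt_self hrs.1.1
      have hgr : IsGreatest S rstar := by
        constructor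
        · exact ⟨QLowPt u rstar, hQs, hrhoQs, hQsu⟩
        · rintro y ⟨Q, hQ, hρ, rfl⟩
          have hQuI : Q u ∈ Set.Icc (Wd u) (Md u) :=
            ⟨wd_le_qc hd0 hQ hu, qc_le_md hd0 hQ hu⟩
          have hgs : g (Q u) ≤ θ := by
            rw [hg_val _ hQuI]
            exact le_of_le_of_eq (hmono _ _ (isQC_QLowPt hd0 hu hQuI.1 hQuI.2) hQ
              fun v hv => qlowpt_le_qc hd0 hQ hu hv) hρ
          obtain ⟨r, hrI, hrθ⟩ := intermediate_value_Icc hQuI.2 hg_cont.continuousOn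
            ⟨hgs, by rw [hgM]; exact hcase⟩
          have hrA : r ∈ A := ⟨⟨hQuI.1.trans hrI.1, hrI.2⟩, hrθ⟩
          exact hrI.1.trans (hub r hrA)
      have hQup : QUpRho d rho θ u = rstar := by rw [hQup_def]; exact hgr.csSup_eq
      refine ⟨by rw [hQup]; exact hgr, ?_, ?_⟩
      · intro _
        refine ⟨rstar, hrs.1, hrhoQs, ?_, hQup⟩
        intro r' hr'I hr'θ
        have : g r' = θ := by rw [hg_val r' hr'I]; exact hr'θ
        exact hub r' ⟨hr'I, this⟩
      · intro h; exact absurd hcase (not_le.2 h)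
    · -- case 2 : rho (QLowPt u (Md u)) < θ
      have hQ₀ : IsQuasiCopula (Fin d) (QLowPt u (Md u)) := isQC_QLowPt hd0 hu hWM le_rfl
      set cl : ℝ → ℝ := fun t => max 0 (min 1 t) with hcl
      have hcl_mem : ∀ t, 0 ≤ cl t ∧ cl t ≤ 1 := fun t =>
        ⟨le_max_left _ _, max_le zero_le_one (min_le_left _ _)⟩
      set F : ℝ → (Fin d → ℝ) → ℝ :=
        fun t v => (1 - cl t) * QLowPt u (Md u) v + cl t * Md v with hF
      have hFQC : ∀ t, IsQuasiCopula (Fin d) (F t) := fun t =>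
        isQC_convex hQ₀ hQCM (hcl_mem t).1 (hcl_mem t).2
      have hFlip : ∀ s t : ℝ, ∀ v, InCube v → |F s v - F t v| ≤ |s - t| := by
        intro s t v hv
        have h1 : F s v - F t v = (cl s - cl t) * (Md v - QLowPt u (Md u) v) := by
          rw [hF]; ring
        rw [h1, abs_mul]
        have h2 : |Md v - QLowPt u (Md u) v| ≤ 1 := by
          rw [abs_sub_le_iff]
          constructor
          · have a := hQ₀.nonneg v hv; have b := hQCM.le_one v hv; linarith
          · have a := hQ₀.le_one v hv; have b := hQCM.nonneg v hv; linarith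
        have h3 : |cl s - cl t| ≤ |s - t| := by
          refine (abs_max_sub_max_le_max _ _ _ _).trans ?_
          rw [sub_self, abs_zero]
          refine max_le (abs_nonneg _) ?_
          refine (abs_min_sub_min_le_max _ _ _ _).trans ?_
          rw [sub_self, abs_zero]
          exact max_le (abs_nonneg _) le_rfl
        calc |cl s - cl t| * |Md v - QLowPt u (Md u) v|
            ≤ |cl s - cl t| * 1 := mul_le_mul_of_nonneg_left h2 (abs_nonneg _)
          _ = |cl s - cl t| := mul_one _
          _ ≤ |s - t| := h3
      have hFcont : Continuous fun t => rho (F t) := cont_of_path rho hcont F hFQC hFlip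
      have hcl0 : cl 0 = 0 := by
        rw [hcl]; dsimp only; rw [min_eq_right zero_le_one, max_self]
      have hcl1 : cl 1 = 1 := by
        rw [hcl]; dsimp only; rw [min_self, max_eq_right zero_le_one]
      have hF0 : F 0 = QLowPt u (Md u) := by
        funext v; rw [hF]; dsimp only; rw [hcl0]; ring
      have hF1 : F 1 = Md := by
        funext v; rw [hF]; dsimp only; rw [hcl1]; ring
      have hθ' : θ ∈ Set.Icc (rho (F 0)) (rho (F 1)) :=
        ⟨by rw [hF0]; exact hcase.le, by rw [hF1]; exact hθ₂.le⟩
      obtain ⟨t₀, ht₀I, ht₀⟩ := intermediate_value_Icc zero_le_one hFcont.continuousOn hθ'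
      have hFu : F t₀ u = Md u := by
        rw [hF]; dsimp only; rw [qlowpt_self hWM]; ring
      have hgr : IsGreatest S (Md u) := by
        refine ⟨⟨F t₀, hFQC t₀, ht₀, hFu⟩, ?_⟩
        rintro y ⟨Q, hQ, hρ, rfl⟩
        exact qc_le_md hd0 hQ hu
      have hQup : QUpRho d rho θ u = Md u := by rw [hQup_def]; exact hgr.csSup_eq
      refine ⟨by rw [hQup]; exact hgr, ?_, fun _ => hQup⟩
      intro h; exact absurd h (not_le.2 hcase)
  refine ⟨?_, ?_⟩
  · intro u hu
    obtain ⟨hgr, h3, h4⟩ := key u hu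
    exact ⟨hgr.1, fun Q hQ hρ => hgr.2 ⟨Q, hQ, hρ, rfl⟩, h3, h4⟩
  · constructor
    · intro u hu
      obtain ⟨⟨⟨Q, hQ, hρ, hQu⟩, _⟩, _, _⟩ := key u hu
      rw [← hQu]; exact hQ.nonneg u hu
    · intro u hu
      obtain ⟨⟨⟨Q, hQ, hρ, hQu⟩, _⟩, _, _⟩ := key u hu
      rw [← hQu]; exact hQ.le_one u hu
    · intro u hu h
      obtain ⟨⟨⟨Q, hQ, hρ, hQu⟩, _⟩, _, _⟩ := key u hu
      rw [← hQu]; exact hQ.zero_boundary u hu h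
    · intro u hu i h
      obtain ⟨⟨⟨Q, hQ, hρ, hQu⟩, _⟩, _, _⟩ := key u hu
      rw [← hQu]; exact hQ.one_boundary u hu i h
    · intro u v hu hv h
      obtain ⟨⟨⟨Q, hQ, hρ, hQu⟩, _⟩, _, _⟩ := key u hu
      have h2 : Q v ≤ QUpRho d rho θ v := (key v hv).1.2 ⟨Q, hQ, hρ, rfl⟩
      rw [← hQu]
      exact (hQ.mono u v hu hv h).trans h2
    · intro u v hu hv
      rw [abs_sub_le_iff]
      constructor
      · obtain ⟨⟨⟨Q, hQ, hρ, hQu⟩, _⟩, _, _⟩ := key u hu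
        have h2 : Q v ≤ QUpRho d rho θ v := (key v hv).1.2 ⟨Q, hQ, hρ, rfl⟩
        have h3 := (abs_le.1 (hQ.lipschitz u v hu hv)).2
        rw [← hQu]; linarith
      · obtain ⟨⟨⟨Q, hQ, hρ, hQv⟩, _⟩, _, _⟩ := key v hv
        have h2 : Q u ≤ QUpRho d rho θ u := (key u hu).1.2 ⟨Q, hQ, hρ, rfl⟩
        have h3 := (abs_le.1 (hQ.lipschitz v u hv hu)).2
        have hsum : ∑ i, |v i - u i| = ∑ i, |u i - v i| :=
          Finset.sum_congr rfl fun i _ => abs_sub_comm _ _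
        rw [← hQv]; linarith
end
end

section
/- Let d ≥ 2 and let I_1, …, I_k be subsets of {1, …, d} with |I_j| ≥ 2 for all j and |I_i ∩ I_j| ≤ 1 for i ≠ j. For each j let Q_j^low and Q_j^up be |I_j|-quasi-copulas with Q_j^low(v) ≤ Q_j^up(v) for all v. Then the functions Q_low^I and Q_up^I are both d-quasi-copulas. -/
open scoped BigOperators NNReal ENNReal

noncomputable section

/-- The improved lower Fréchet–Hoeffding bound from information on the
lower-dimensional margins `I_1, …, I_k`:
`max( max_j ( Q_j^low(u_{I_j}) + Σ_{l ∉ I_j} (u_l − 1) ), W_d(u) )`. -/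
def QLowI {d k : ℕ} (J : Fin k → Finset (Fin d))
    (Ql : (j : Fin k) → ((↥(J j) → ℝ) → ℝ)) (u : Fin d → ℝ) : ℝ :=
  max (⨆ j, (Ql j (fun i => u i.val) + ∑ l ∈ (J j)ᶜ, (u l - 1))) (Wd u)

/-- The improved upper Fréchet–Hoeffding bound from information on the
lower-dimensional margins `I_1, …, I_k`:
`min( min_j Q_j^up(u_{I_j}), M_d(u) )`. -/
def QUpI {d k : ℕ} (J : Fin k → Finset (Fin d))
    (Qu : (j : Fin k) → ((↥(J j) → ℝ) → ℝ)) (u : Fin d → ℝ) : ℝ :=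
  min (⨅ j, Qu j (fun i => u i.val)) (Md u)


section FHHelpers
variable {ι : Type*} [Fintype ι]

lemma Wd_nonneg (u : ι → ℝ) : 0 ≤ Wd u := le_max_left _ _

lemma Wd_le_one (u : ι → ℝ) (hu : InCube u) : Wd u ≤ 1 := by
  refine max_le zero_le_one ?_
  have h : ∑ i, u i ≤ (Fintype.card ι : ℝ) := by
    calc ∑ i, u i ≤ ∑ _i : ι, (1:ℝ) := Finset.sum_le_sum fun i _ => (hu i).2
      _ = (Fintype.card ι : ℝ) := by simp
  linarith

lemma Wd_mono (u v : ι → ℝ) (h : ∀ i, u i ≤ v i) : Wd u ≤ Wd v :=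
  max_le_max le_rfl (by
    have := Finset.sum_le_sum (s := Finset.univ) (f := u) (g := v) (fun i _ => h i); linarith)

lemma Wd_lip (u v : ι → ℝ) : |Wd u - Wd v| ≤ ∑ i, |u i - v i| := by
  unfold Wd
  rw [max_comm 0 ((∑ i, u i) - _ + 1), max_comm 0 ((∑ i, v i) - _ + 1)]
  refine (abs_max_sub_max_le_abs _ _ _).trans ?_
  have h : (∑ i, u i) - (Fintype.card ι : ℝ) + 1 - ((∑ i, v i) - (Fintype.card ι : ℝ) + 1)
      = ∑ i, (u i - v i) := by rw [Finset.sum_sub_distrib]; ring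
  rw [h]
  exact Finset.abs_sum_le_sum_abs _ _

lemma Md_le (u : ι → ℝ) (i : ι) : Md u ≤ u i :=
  csInf_le (Set.finite_range u).bddBelow ⟨i, rfl⟩

omit [Fintype ι] in
lemma le_Md [Nonempty ι] {c : ℝ} (u : ι → ℝ) (h : ∀ i, c ≤ u i) : c ≤ Md u :=
  le_csInf (Set.range_nonempty u) (by rintro _ ⟨i, rfl⟩; exact h i)

lemma Md_mono [Nonempty ι] (u v : ι → ℝ) (h : ∀ i, u i ≤ v i) : Md u ≤ Md v :=
  le_Md v fun i => (Md_le u i).trans (h i)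

lemma Md_lip [Nonempty ι] (u v : ι → ℝ) : |Md u - Md v| ≤ ∑ i, |u i - v i| := by
  have key : ∀ a b : ι → ℝ, Md a ≤ Md b + ∑ i, |a i - b i| := by
    intro a b
    rw [← sub_le_iff_le_add]
    refine le_Md b fun i => ?_
    have h1 : Md a ≤ a i := Md_le a i
    have h2 : a i - b i ≤ |a i - b i| := le_abs_self _
    have h3 : |a i - b i| ≤ ∑ j, |a j - b j| :=
      Finset.single_le_sum (f := fun j => |a j - b j|) (fun j _ => abs_nonneg _)
        (Finset.mem_univ i)
    linarith
  have hsym : ∑ i, |v i - u i| = ∑ i, |u i - v i| :=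
    Finset.sum_congr rfl fun i _ => abs_sub_comm _ _
  rw [abs_sub_le_iff]
  exact ⟨by linarith [key u v], by linarith [key v u]⟩

lemma ciSup_mono'' {α : Type*} [Fintype α] [Nonempty α] (f g : α → ℝ) (h : ∀ j, f j ≤ g j) :
    (⨆ j, f j) ≤ ⨆ j, g j :=
  ciSup_le fun j => (h j).trans (le_ciSup (Set.finite_range g).bddAbove j)

lemma ciInf_mono'' {α : Type*} [Fintype α] [Nonempty α] (f g : α → ℝ) (h : ∀ j, f j ≤ g j) :
    (⨅ j, f j) ≤ ⨅ j, g j :=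
  le_ciInf fun j => (ciInf_le (Set.finite_range f).bddBelow j).trans (h j)

lemma ciSup_lip {α : Type*} [Fintype α] [Nonempty α] (f g : α → ℝ) (C : ℝ)
    (h : ∀ j, |f j - g j| ≤ C) : |(⨆ j, f j) - ⨆ j, g j| ≤ C := by
  have key : ∀ a b : α → ℝ, (∀ j, |a j - b j| ≤ C) → (⨆ j, a j) ≤ (⨆ j, b j) + C := by
    intro a b hab
    refine ciSup_le fun j => ?_
    have h1 := le_ciSup (Set.finite_range b).bddAbove j
    have h2 := (abs_le.mp (hab j)).2
    linarith
  rw [abs_sub_le_iff]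
  exact ⟨by linarith [key f g h],
    by linarith [key g f fun j => (abs_sub_comm (f j) (g j)) ▸ h j]⟩

lemma ciInf_lip {α : Type*} [Fintype α] [Nonempty α] (f g : α → ℝ) (C : ℝ)
    (h : ∀ j, |f j - g j| ≤ C) : |(⨅ j, f j) - ⨅ j, g j| ≤ C := by
  have key : ∀ a b : α → ℝ, (∀ j, |a j - b j| ≤ C) → (⨅ j, a j) ≤ (⨅ j, b j) + C := by
    intro a b hab
    rw [← sub_le_iff_le_add]
    refine le_ciInf fun j => ?_
    have h1 := ciInf_le (Set.finite_range a).bddBelow j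
    have h2 := (abs_le.mp (hab j)).2
    linarith
  rw [abs_sub_le_iff]
  exact ⟨by linarith [key f g h],
    by linarith [key g f fun j => (abs_sub_comm (f j) (g j)) ▸ h j]⟩

end FHHelpers

section MarginHelpers
variable {d : ℕ}

lemma margin_cube (s : Finset (Fin d)) (u : Fin d → ℝ) (hu : InCube u) :
    InCube (fun i : ↥s => u i.val) := fun i => hu i.val

lemma margin_one {s : Finset (Fin d)} {Q : (↥s → ℝ) → ℝ} (hQ : IsQuasiCopula ↥s Q)
    (hne : s.Nonempty) (u : Fin d → ℝ) (hu : InCube u) (i : Fin d)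
    (h1 : ∀ l, l ≠ i → u l = 1) :
    Q (fun m : ↥s => u m.val) = if i ∈ s then u i else 1 := by
  by_cases hi : i ∈ s
  · rw [if_pos hi]
    exact hQ.one_boundary _ (margin_cube _ _ hu) ⟨i, hi⟩
      (fun m hm => h1 m.val (fun hv => hm (Subtype.ext hv)))
  · rw [if_neg hi]
    obtain ⟨i0, hi0⟩ := hne
    have hob := hQ.one_boundary (fun m : ↥s => u m.val) (margin_cube _ _ hu) ⟨i0, hi0⟩
      (fun m _ => h1 m.val (fun hv => hi (hv ▸ m.2)))
    rw [hob]
    exact h1 i0 (fun hv => hi (hv ▸ hi0))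

lemma compl_sum_one (s : Finset (Fin d)) (u : Fin d → ℝ) (i : Fin d)
    (h1 : ∀ l, l ≠ i → u l = 1) :
    ∑ l ∈ sᶜ, (u l - 1) = if i ∈ s then 0 else u i - 1 := by
  by_cases hi : i ∈ s
  · rw [if_pos hi]
    exact Finset.sum_eq_zero fun l hl => by
      rw [h1 l (fun h => (Finset.mem_compl.mp hl) (h ▸ hi))]; ring
  · rw [if_neg hi]
    exact Finset.sum_eq_single i (fun l _ hne => by rw [h1 l hne]; ring)
      (fun h => absurd (Finset.mem_compl.mpr hi) h)

lemma sum_one_boundary (u : Fin d → ℝ) (i : Fin d) (h1 : ∀ l, l ≠ i → u l = 1) :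
    ∑ l, u l = u i + ((d : ℝ) - 1) := by
  classical
  rw [← Finset.add_sum_erase _ u (Finset.mem_univ i)]
  congr 1
  rw [Finset.sum_congr rfl (fun l hl => h1 l (Finset.ne_of_mem_erase hl))]
  rw [Finset.sum_const, Finset.card_erase_of_mem (Finset.mem_univ i), Finset.card_univ,
    Fintype.card_fin]
  have hd1 : 1 ≤ d := i.pos
  rw [nsmul_eq_mul, mul_one, Nat.cast_sub hd1, Nat.cast_one]

lemma sum_zero_boundary (u : Fin d → ℝ) (hu : InCube u) (i : Fin d) (h0 : u i = 0) :
    ∑ l, u l ≤ (d : ℝ) - 1 := by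
  classical
  rw [← Finset.add_sum_erase _ u (Finset.mem_univ i), h0, zero_add]
  calc ∑ l ∈ Finset.univ.erase i, u l ≤ ∑ _l ∈ Finset.univ.erase i, (1:ℝ) :=
      Finset.sum_le_sum fun l _ => (hu l).2
    _ = (d:ℝ) - 1 := by
      rw [Finset.sum_const, Finset.card_erase_of_mem (Finset.mem_univ i), Finset.card_univ,
        Fintype.card_fin]
      have hd1 : 1 ≤ d := i.pos
      rw [nsmul_eq_mul, mul_one, Nat.cast_sub hd1, Nat.cast_one]

end MarginHelpers

/-- the bounds built from lower-dimensional margin information are quasi-copulas. -/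
theorem stmt8 (d k : ℕ) (hd : 2 ≤ d) (hk : 0 < k) (J : Fin k → Finset (Fin d))
    (hcard : ∀ j, 2 ≤ (J j).card)
    (hinter : ∀ i j, i ≠ j → ((J i) ∩ (J j)).card ≤ 1)
    (Ql Qu : (j : Fin k) → ((↥(J j) → ℝ) → ℝ))
    (hQl : ∀ j, IsQuasiCopula ↥(J j) (Ql j)) (hQu : ∀ j, IsQuasiCopula ↥(J j) (Qu j))
    (hle : ∀ j, ∀ v : ↥(J j) → ℝ, InCube v → Ql j v ≤ Qu j v) :
    IsQuasiCopula (Fin d) (QLowI J Ql) ∧ IsQuasiCopula (Fin d) (QUpI J Qu) := by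
  haveI nek : Nonempty (Fin k) := ⟨⟨0, hk⟩⟩
  have hd0 : 0 < d := by omega
  haveI ned : Nonempty (Fin d) := ⟨⟨0, hd0⟩⟩
  have hne : ∀ j, (J j).Nonempty := fun j => Finset.card_pos.mp (by have := hcard j; omega)
  set F : Fin k → (Fin d → ℝ) → ℝ :=
    fun j u => Ql j (fun i => u i.val) + ∑ l ∈ (J j)ᶜ, (u l - 1) with hF
  have hQLow : ∀ u, QLowI J Ql u = max (⨆ j, F j u) (Wd u) := fun u => rfl
  set G : Fin k → (Fin d → ℝ) → ℝ := fun j u => Qu j (fun i => u i.val) with hG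
  have hQUp : ∀ u, QUpI J Qu u = min (⨅ j, G j u) (Md u) := fun u => rfl
  have hsumnp : ∀ (s : Finset (Fin d)) (u : Fin d → ℝ), InCube u →
      ∑ l ∈ sᶜ, (u l - 1) ≤ 0 :=
    fun s u hu => Finset.sum_nonpos fun l _ => by linarith [(hu l).2]
  have hFle : ∀ j u, InCube u → F j u ≤ 1 := fun j u hu => by
    have h1 := (hQl j).le_one _ (margin_cube (J j) u hu)
    have h2 := hsumnp (J j) u hu
    simp only [hF]; linarith
  constructor
  · constructor
    · -- nonneg
      intro u _
      rw [hQLow]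
      exact (Wd_nonneg u).trans (le_max_right _ _)
    · -- le_one
      intro u hu
      rw [hQLow]
      exact max_le (ciSup_le fun j => hFle j u hu) (Wd_le_one u hu)
    · -- zero boundary
      rintro u hu ⟨i, hi0⟩
      rw [hQLow]
      have hW : Wd u = 0 := by
        have hs := sum_zero_boundary u hu i hi0
        unfold Wd
        rw [Fintype.card_fin]
        exact max_eq_left (by linarith)
      rw [hW]
      refine max_eq_right (ciSup_le fun j => ?_)
      by_cases hij : i ∈ J j
      · have h1 : Ql j (fun m : ↥(J j) => u m.val) = 0 :=
          (hQl j).zero_boundary _ (margin_cube (J j) u hu) ⟨⟨i, hij⟩, hi0⟩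
        have h2 := hsumnp (J j) u hu
        simp only [hF, h1]; linarith
      · have h1 := (hQl j).le_one _ (margin_cube (J j) u hu)
        have h2a : ∑ l ∈ (J j)ᶜ, (u l - 1) ≤ ∑ l ∈ (J j)ᶜ, (if l = i then (-1:ℝ) else 0) := by
          refine Finset.sum_le_sum fun l _ => ?_
          by_cases h : l = i
          · subst h; simp [hi0]
          · rw [if_neg h]; linarith [(hu l).2]
        have h2b : ∑ l ∈ (J j)ᶜ, (if l = i then (-1:ℝ) else 0) = -1 := by
          rw [Finset.sum_ite_eq' ((J j)ᶜ) i (fun _ => (-1:ℝ)),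
            if_pos (Finset.mem_compl.mpr hij)]
        simp only [hF]; linarith
    · -- one boundary
      intro u hu i h1
      rw [hQLow]
      have hsum : ∑ l, u l = u i + ((d:ℝ) - 1) := sum_one_boundary u i h1
      have hW : Wd u = u i := by
        unfold Wd
        rw [Fintype.card_fin, hsum]
        have he : u i + ((d:ℝ) - 1) - (d:ℝ) + 1 = u i := by ring
        rw [he]
        exact max_eq_right (hu i).1
      have hFval : ∀ j, F j u = u i := by
        intro j
        have hm := margin_one (hQl j) (hne j) u hu i h1
        have hc := compl_sum_one (J j) u i h1
        by_cases hij : i ∈ J j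
        · simp only [hF, hm, hc, if_pos hij]; ring
        · simp only [hF, hm, hc, if_neg hij]; ring
      have hsup : (⨆ j, F j u) = u i := by
        rw [show (fun j => F j u) = fun _ => u i from funext hFval, ciSup_const]
      rw [hsup, hW, max_self]
    · -- mono
      intro u v hu hv huv
      rw [hQLow, hQLow]
      refine max_le_max (ciSup_mono'' _ _ fun j => ?_) (Wd_mono u v huv)
      have h1 := (hQl j).mono _ _ (margin_cube (J j) u hu) (margin_cube (J j) v hv)
        (fun m => huv m.val)
      have h2 : ∑ l ∈ (J j)ᶜ, (u l - 1) ≤ ∑ l ∈ (J j)ᶜ, (v l - 1) :=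
        Finset.sum_le_sum fun l _ => by linarith [huv l]
      simp only [hF]; linarith
    · -- lipschitz
      intro u v hu hv
      rw [hQLow, hQLow]
      refine (abs_max_sub_max_le_max _ _ _ _).trans (max_le ?_ (Wd_lip u v))
      refine ciSup_lip _ _ _ fun j => ?_
      have h1 := (hQl j).lipschitz _ _ (margin_cube (J j) u hu) (margin_cube (J j) v hv)
      have h2 : ∑ m : ↥(J j), |u m.val - v m.val| = ∑ l ∈ J j, |u l - v l| :=
        Finset.sum_coe_sort (J j) (fun l => |u l - v l|)
      have h3 : |∑ l ∈ (J j)ᶜ, (u l - 1) - ∑ l ∈ (J j)ᶜ, (v l - 1)|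
          ≤ ∑ l ∈ (J j)ᶜ, |u l - v l| := by
        rw [← Finset.sum_sub_distrib]
        refine (Finset.abs_sum_le_sum_abs _ _).trans
          (le_of_eq (Finset.sum_congr rfl fun l _ => by congr 1; ring))
      have h4 : ∑ l ∈ J j, |u l - v l| + ∑ l ∈ (J j)ᶜ, |u l - v l| = ∑ l, |u l - v l| :=
        Finset.sum_add_sum_compl _ _
      have key : |F j u - F j v| ≤ (∑ m : ↥(J j), |u m.val - v m.val|)
          + ∑ l ∈ (J j)ᶜ, |u l - v l| := by
        have e : F j u - F j v
            = (Ql j (fun m : ↥(J j) => u m.val) - Ql j (fun m : ↥(J j) => v m.val))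
              + (∑ l ∈ (J j)ᶜ, (u l - 1) - ∑ l ∈ (J j)ᶜ, (v l - 1)) := by
          simp only [hF]; ring
        rw [e]
        exact (abs_add_le _ _).trans (add_le_add h1 h3)
      rw [h2] at key
      rw [← h4]
      exact key
  · constructor
    · -- nonneg
      intro u hu
      rw [hQUp]
      exact le_min (le_ciInf fun j => (hQu j).nonneg _ (margin_cube (J j) u hu))
        (le_Md u fun i => (hu i).1)
    · -- le_one
      intro u hu
      rw [hQUp]
      exact (min_le_right _ _).trans ((Md_le u ⟨0, hd0⟩).trans (hu _).2)
    · -- zero boundary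
      rintro u hu ⟨i, hi0⟩
      rw [hQUp]
      have hM : Md u = 0 :=
        le_antisymm (hi0 ▸ Md_le u i) (le_Md u fun l => (hu l).1)
      rw [hM]
      exact min_eq_right (le_ciInf fun j => (hQu j).nonneg _ (margin_cube (J j) u hu))
    · -- one boundary
      intro u hu i h1
      rw [hQUp]
      have hM : Md u = u i := by
        refine le_antisymm (Md_le u i) (le_Md u fun l => ?_)
        by_cases h : l = i
        · subst h; exact le_refl _
        · rw [h1 l h]; exact (hu i).2
      rw [hM]
      refine min_eq_right (le_ciInf fun j => ?_)
      have hm := margin_one (hQu j) (hne j) u hu i h1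
      simp only [hG, hm]
      by_cases hij : i ∈ J j
      · rw [if_pos hij]
      · rw [if_neg hij]; exact (hu i).2
    · -- mono
      intro u v hu hv huv
      rw [hQUp, hQUp]
      refine min_le_min (ciInf_mono'' _ _ fun j => ?_) (Md_mono u v huv)
      exact (hQu j).mono _ _ (margin_cube (J j) u hu) (margin_cube (J j) v hv)
        (fun m => huv m.val)
    · -- lipschitz
      intro u v hu hv
      rw [hQUp, hQUp]
      refine (abs_min_sub_min_le_max _ _ _ _).trans (max_le ?_ (Md_lip u v))
      refine ciInf_lip _ _ _ fun j => ?_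
      have h1 := (hQu j).lipschitz _ _ (margin_cube (J j) u hu) (margin_cube (J j) v hv)
      have h2 : ∑ m : ↥(J j), |u m.val - v m.val| = ∑ l ∈ J j, |u l - v l| :=
        Finset.sum_coe_sort (J j) (fun l => |u l - v l|)
      have h3 : ∑ l ∈ J j, |u l - v l| ≤ ∑ l, |u l - v l| :=
        Finset.sum_le_sum_of_subset_of_nonneg (Finset.subset_univ _)
          (fun l _ _ => abs_nonneg _)
      calc |G j u - G j v| ≤ ∑ m : ↥(J j), |u m.val - v m.val| := h1
        _ ≤ ∑ l, |u l - v l| := by rw [h2]; exact h3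
end
end
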